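/- arXiv:2307.06772 — 2 statements merged into one kernel-verified Lean document; each statement's English description precedes it below -/
import Mathlib

section
/- Let v be the first vertex of the path P satisfying the cover condition, and set C* := Partition(v) ∩ P_{⪯v}. Then there exists a minimum weight vertex cover of the entire path P that contains C*. -/
/-
Along the path, a cover of `v_0, …, v_m` either contains `v_m`, and then weighs at least
`Partition(v_m) ∩ P_{⪯ v_m}`, or does not, and then weighs at least the opposite side. Induction on
`m` proves this as long as no `v_j` with `j < m` satisfies the cover condition: for such `j` the
opposite side is the lighter one. At the first vertex `v_l` satisfying the condition both bounds
give `ω(C*) ≤ ω(D)` for every cover `D` of `P_{⪯ v_l}`, so replacing the part of a minimum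
weight cover lying in `P_{⪯ v_l}` by `C*` yields a cover that is still of minimum weight.
-/

open Finset

/-- `C` is a vertex cover of the subpath of the path `P = (v_0, …, v_{n-1})`
induced by the vertices `v_lo, v_{lo+1}, …, v_{hi-1}` (half-open interval `[lo, hi)`);
the edges of this subpath are `{v_i, v_{i+1}}` for `lo ≤ i` and `i + 1 < hi`. -/
def IsCoverOn (lo hi : ℕ) (C : Finset ℕ) : Prop :=
  (∀ j ∈ C, lo ≤ j ∧ j < hi) ∧ ∀ i : ℕ, lo ≤ i → i + 1 < hi → (i ∈ C ∨ i + 1 ∈ C)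

/-- The total weight `ω(C) = ∑_{v ∈ C} ω(v)` of a set of vertices. -/
def wsum (ω : ℕ → ℝ) (C : Finset ℕ) : ℝ := ∑ j ∈ C, ω j

/-- `C` is a minimum weight vertex cover (MWVC) of the subpath on the vertices `[lo, hi)`. -/
def IsMWVCOn (ω : ℕ → ℝ) (lo hi : ℕ) (C : Finset ℕ) : Prop :=
  IsCoverOn lo hi C ∧ ∀ D : Finset ℕ, IsCoverOn lo hi D → wsum ω C ≤ wsum ω D

/-- `Partition(v_l) ∩ P_{⪯ v_l}`: the vertices up to (and including) `v_l` lying on the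
same side of the path's bipartition as `v_l`. -/
def sameSide (l : ℕ) : Finset ℕ := (range (l + 1)).filter fun j => j % 2 = l % 2

/-- `P_{⪯ v_l} ∖ Partition(v_l)`: the vertices up to `v_l` on the opposite side. -/
def otherSide (l : ℕ) : Finset ℕ := (range (l + 1)).filter fun j => j % 2 ≠ l % 2

/-- `v_l` satisfies the (weak) cover condition. -/
def CoverCond (ω : ℕ → ℝ) (l : ℕ) : Prop := wsum ω (sameSide l) ≤ wsum ω (otherSide l)

/-- `v_l` satisfies the strict cover condition. -/
def StrictCoverCond (ω : ℕ → ℝ) (l : ℕ) : Prop := wsum ω (sameSide l) < wsum ω (otherSide l)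

lemma mem_sameSide {j l : ℕ} : j ∈ sameSide l ↔ j < l + 1 ∧ j % 2 = l % 2 := by
  simp [sameSide]

lemma mem_otherSide {j l : ℕ} : j ∈ otherSide l ↔ j < l + 1 ∧ j % 2 ≠ l % 2 := by
  simp [otherSide]

lemma sameSide_zero : sameSide 0 = {0} := by
  ext j; simp only [mem_sameSide, mem_singleton]; omega

lemma otherSide_zero : otherSide 0 = ∅ := by
  ext j; simp only [mem_otherSide, notMem_empty, iff_false]; omega

lemma otherSide_succ (m : ℕ) : otherSide (m + 1) = sameSide m := by
  ext j; simp only [mem_otherSide, mem_sameSide]; omega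

lemma sameSide_succ (m : ℕ) : sameSide (m + 1) = insert (m + 1) (otherSide m) := by
  ext j; simp only [mem_sameSide, mem_insert, mem_otherSide]; omega

lemma succ_notMem_otherSide (m : ℕ) : m + 1 ∉ otherSide m := by
  simp [mem_otherSide]

lemma wsum_insert {ω : ℕ → ℝ} {a : ℕ} {C : Finset ℕ} (h : a ∉ C) :
    wsum ω (insert a C) = ω a + wsum ω C :=
  sum_insert h

lemma wsum_union {ω : ℕ → ℝ} {C D : Finset ℕ} (h : Disjoint C D) :
    wsum ω (C ∪ D) = wsum ω C + wsum ω D :=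
  sum_union h

namespace IsCoverOn

variable {lo hi : ℕ} {C : Finset ℕ}

lemma erase_top (hC : IsCoverOn lo (hi + 1) C) : IsCoverOn lo hi (C.erase hi) := by
  refine ⟨fun j hj => ?_, fun i hi₀ hi₁ => ?_⟩
  · have := hC.1 j (mem_of_mem_erase hj)
    have := ne_of_mem_erase hj
    omega
  · rcases hC.2 i hi₀ (by omega) with h | h
    · exact Or.inl (mem_erase.2 ⟨by omega, h⟩)
    · exact Or.inr (mem_erase.2 ⟨by omega, h⟩)

lemma of_top_notMem (hC : IsCoverOn lo (hi + 1) C) (h : hi ∉ C) : IsCoverOn lo hi C :=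
  erase_eq_of_notMem h ▸ hC.erase_top

lemma inter_range {m : ℕ} (hC : IsCoverOn lo hi C) (hm : m ≤ hi) :
    IsCoverOn lo m (C ∩ range m) := by
  refine ⟨fun j hj => ?_, fun i hi₀ hi₁ => ?_⟩
  · rw [mem_inter, mem_range] at hj
    exact ⟨(hC.1 j hj.1).1, hj.2⟩
  · rcases hC.2 i hi₀ (by omega) with h | h
    · exact Or.inl (mem_inter.2 ⟨h, mem_range.2 (by omega)⟩)
    · exact Or.inr (mem_inter.2 ⟨h, mem_range.2 (by omega)⟩)

lemma sdiff_range_union_sameSide {n l : ℕ} (hC : IsCoverOn 0 n C) (hl : l < n) :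
    IsCoverOn 0 n (C \ range (l + 1) ∪ sameSide l) := by
  refine ⟨fun j hj => ?_, fun i _ hi => ?_⟩
  · rcases mem_union.1 hj with h | h
    · exact hC.1 j (mem_sdiff.1 h).1
    · have := mem_sameSide.1 h
      omega
  · simp only [mem_union, mem_sdiff, mem_range, mem_sameSide]
    by_cases hil : i < l + 1
    · omega
    · rcases hC.2 i (Nat.zero_le i) hi with h | h
      · exact Or.inl (Or.inl ⟨h, hil⟩)
      · exact Or.inr (Or.inl ⟨h, by omega⟩)

end IsCoverOn

lemma exists_isMWVCOn (ω : ℕ → ℝ) (lo hi : ℕ) : ∃ C, IsMWVCOn ω lo hi C := by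
  classical
  have hIco : IsCoverOn lo hi (Ico lo hi) :=
    ⟨fun j hj => mem_Ico.1 hj, fun i hi₀ hi₁ => Or.inl (mem_Ico.2 ⟨hi₀, by omega⟩)⟩
  obtain ⟨C, hC, hmin⟩ := exists_min_image ((Ico lo hi).powerset.filter (IsCoverOn lo hi))
    (wsum ω) ⟨Ico lo hi, mem_filter.2 ⟨mem_powerset_self _, hIco⟩⟩
  refine ⟨C, (mem_filter.1 hC).2, fun D hD => hmin D (mem_filter.2 ⟨?_, hD⟩)⟩
  exact mem_powerset.2 fun j hj => mem_Ico.2 (hD.1 j hj)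

lemma wsum_side_le_of_isCoverOn {ω : ℕ → ℝ} {m : ℕ} (hfirst : ∀ j < m, ¬ CoverCond ω j)
    {D : Finset ℕ} (hD : IsCoverOn 0 (m + 1) D) :
    (m ∈ D → wsum ω (sameSide m) ≤ wsum ω D) ∧ (m ∉ D → wsum ω (otherSide m) ≤ wsum ω D) := by
  induction m generalizing D with
  | zero =>
    have hD0 : ∀ j ∈ D, j = 0 := fun j hj => by have := hD.1 j hj; omega
    refine ⟨fun h => ?_, fun h => ?_⟩
    · rw [sameSide_zero, eq_singleton_iff_unique_mem.2 ⟨h, hD0⟩]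
    · rw [otherSide_zero, eq_empty_of_forall_notMem fun j hj => h (hD0 j hj ▸ hj)]
  | succ m ih =>
    have ih' := fun {D} => ih (fun j hj => hfirst j (by omega)) (D := D)
    refine ⟨fun hm => ?_, fun hm => ?_⟩
    · have hother : wsum ω (otherSide m) ≤ wsum ω (D.erase (m + 1)) := by
        by_cases hmD : m ∈ D.erase (m + 1)
        · have hlt : wsum ω (otherSide m) < wsum ω (sameSide m) :=
            not_le.1 (hfirst m (by omega))
          exact hlt.le.trans ((ih' hD.erase_top).1 hmD)
        · exact (ih' hD.erase_top).2 hmD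
      have hsplit : ω (m + 1) + wsum ω (D.erase (m + 1)) = wsum ω D := add_sum_erase D ω hm
      rw [sameSide_succ, wsum_insert (succ_notMem_otherSide m)]
      linarith
    · have hmD : m ∈ D := (hD.2 m (Nat.zero_le m) (by omega)).resolve_right hm
      rw [otherSide_succ]
      exact (ih' (hD.of_top_notMem hm)).1 hmD

lemma wsum_sameSide_le_of_isCoverOn {ω : ℕ → ℝ} {l : ℕ} (hcc : CoverCond ω l)
    (hfirst : ∀ j < l, ¬ CoverCond ω j) {D : Finset ℕ} (hD : IsCoverOn 0 (l + 1) D) :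
    wsum ω (sameSide l) ≤ wsum ω D := by
  by_cases h : l ∈ D
  · exact (wsum_side_le_of_isCoverOn hfirst hD).1 h
  · exact hcc.trans ((wsum_side_le_of_isCoverOn hfirst hD).2 h)

/-- If `v_l` is the first vertex of the path satisfying the cover
condition, then some MWVC of the whole path contains `Partition(v_l) ∩ P_{⪯ v_l}`. -/
theorem stmt_1 (n l : ℕ) (ω : ℕ → ℝ) (hl : l < n)
    (hcc : CoverCond ω l) (hfirst : ∀ j, j < l → ¬ CoverCond ω j) :
    ∃ C : Finset ℕ, IsMWVCOn ω 0 n C ∧ sameSide l ⊆ C := by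
  obtain ⟨C, hC, hCmin⟩ := exists_isMWVCOn ω 0 n
  have hdisj : Disjoint (C \ range (l + 1)) (sameSide l) :=
    disjoint_left.2 fun j hj hj' => (mem_sdiff.1 hj).2 (mem_range.2 (mem_sameSide.1 hj').1)
  refine ⟨C \ range (l + 1) ∪ sameSide l,
    ⟨hC.sdiff_range_union_sameSide hl, fun D hD => ?_⟩, subset_union_right⟩
  calc wsum ω (C \ range (l + 1) ∪ sameSide l)
      = wsum ω (C \ range (l + 1)) + wsum ω (sameSide l) := wsum_union hdisj
    _ ≤ wsum ω (C \ range (l + 1)) + wsum ω (C ∩ range (l + 1)) := by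
        gcongr
        exact wsum_sameSide_le_of_isCoverOn hcc hfirst (hC.inter_range hl)
    _ = wsum ω C := by rw [add_comm]; exact sum_inter_add_sum_sdiff C _ ω
    _ ≤ wsum ω D := hCmin D hD
end

section
/- In Stackelberg Vertex Cover on a path, let p ∈ Pr be a priceable vertex and π : Pr → ℝ a pricing such that some minimum weight vertex cover of P w.r.t. w_π does not contain p. Then for every x ≥ π(p), rev(π[p ↦ x]) ≤ rev(π); i.e., raising the price of p beyond a value at which the follower can already exclude p cannot improve the leader's revenue. -/
open Finset

/-- The weights induced on the vertices by the pricing `π` on the priceable vertices `Pr`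
and the fixed weights `ω` on the fixed-price vertices. -/
def wpr (Pr : Finset ℕ) (ω π : ℕ → ℝ) : ℕ → ℝ := fun v => if v ∈ Pr then π v else ω v

/-- The leader's revenue under the pricing `π`: the maximum, over all minimum weight vertex
covers `C` of the path w.r.t. the induced weights, of `∑_{p ∈ C ∩ Pr} π(p)`
(the follower breaks ties in favor of the leader). -/
noncomputable def rev (n : ℕ) (Pr : Finset ℕ) (ω π : ℕ → ℝ) : ℝ :=
  sSup { r : ℝ | ∃ C : Finset ℕ, IsMWVCOn (wpr Pr ω π) 0 n C ∧ r = ∑ p ∈ C ∩ Pr, π p }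

/-! Raising the weight of a vertex `p` that some MWVC `C₀` avoids leaves `C₀` minimum, so the
minimum weight does not change; a cover containing `p` now weighs strictly more than before, hence
no MWVC for the raised weights contains `p`. Every such MWVC therefore weighs the same under the
old weights, is an MWVC there too, and earns the leader the same revenue. -/

section RaiseWeight

variable {w : ℕ → ℝ} {p : ℕ} {y : ℝ} {lo hi : ℕ} {C₀ C : Finset ℕ}

lemma wsum_update_of_notMem (hpC : p ∉ C) : wsum (Function.update w p y) C = wsum w C :=
  Finset.sum_update_of_notMem hpC _ _

lemma wsum_le_wsum_update (hy : w p ≤ y) (C : Finset ℕ) :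
    wsum w C ≤ wsum (Function.update w p y) C := by
  refine Finset.sum_le_sum fun v _ => ?_
  rcases eq_or_ne v p with rfl | hv
  · simpa using hy
  · simp [hv]

lemma wsum_lt_wsum_update (hy : w p < y) (hpC : p ∈ C) :
    wsum w C < wsum (Function.update w p y) C := by
  have hsplit (u : ℕ → ℝ) : wsum u C = u p + ∑ v ∈ C.erase p, u v :=
    (Finset.add_sum_erase C u hpC).symm
  rw [hsplit, hsplit, Function.update_self,
    Finset.sum_congr rfl fun v hv => Function.update_of_ne (Finset.ne_of_mem_erase hv) y w]
  linarith

lemma IsMWVCOn.update_of_notMem (hC₀ : IsMWVCOn w lo hi C₀) (hpC₀ : p ∉ C₀) (hy : w p ≤ y) :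
    IsMWVCOn (Function.update w p y) lo hi C₀ :=
  ⟨hC₀.1, fun D hD => by
    rw [wsum_update_of_notMem hpC₀]
    exact (hC₀.2 D hD).trans (wsum_le_wsum_update hy D)⟩

lemma IsMWVCOn.notMem_of_update (hC₀ : IsMWVCOn w lo hi C₀) (hpC₀ : p ∉ C₀) (hy : w p < y)
    (hC : IsMWVCOn (Function.update w p y) lo hi C) : p ∉ C := by
  intro hpC
  have := calc
    wsum w C < wsum (Function.update w p y) C := wsum_lt_wsum_update hy hpC
    _ ≤ wsum (Function.update w p y) C₀ := hC.2 C₀ hC₀.1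
    _ = wsum w C₀ := wsum_update_of_notMem hpC₀
  exact (hC₀.2 C hC.1).not_gt this

lemma IsMWVCOn.of_update (hC₀ : IsMWVCOn w lo hi C₀) (hpC₀ : p ∉ C₀)
    (hC : IsMWVCOn (Function.update w p y) lo hi C) (hpC : p ∉ C) : IsMWVCOn w lo hi C :=
  ⟨hC.1, fun D hD => calc
    wsum w C = wsum (Function.update w p y) C := (wsum_update_of_notMem hpC).symm
    _ ≤ wsum (Function.update w p y) C₀ := hC.2 C₀ hC₀.1
    _ = wsum w C₀ := wsum_update_of_notMem hpC₀
    _ ≤ wsum w D := hC₀.2 D hD⟩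

end RaiseWeight

section Revenue

variable {Pr : Finset ℕ} {ω π : ℕ → ℝ}

lemma wpr_update {p : ℕ} (hp : p ∈ Pr) (x : ℝ) :
    wpr Pr ω (Function.update π p x) = Function.update (wpr Pr ω π) p x := by
  funext v
  rcases eq_or_ne v p with rfl | hv
  · simp [wpr, hp]
  · simp [wpr, hv]

lemma sum_inter_le_wsum_wpr (hω : ∀ v, v ∉ Pr → 0 ≤ ω v) (C : Finset ℕ) :
    ∑ q ∈ C ∩ Pr, π q ≤ wsum (wpr Pr ω π) C := by
  calc ∑ q ∈ C ∩ Pr, π q = ∑ q ∈ C ∩ Pr, wpr Pr ω π q :=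
        Finset.sum_congr rfl fun q hq => (if_pos (Finset.mem_inter.mp hq).2).symm
    _ ≤ wsum (wpr Pr ω π) C :=
        Finset.sum_le_sum_of_subset_of_nonneg Finset.inter_subset_left fun v hvC hv => by
          have hvPr : v ∉ Pr := fun h => hv (Finset.mem_inter.mpr ⟨hvC, h⟩)
          simpa [wpr, hvPr] using hω v hvPr

lemma bddAbove_revenues {n : ℕ} (hω : ∀ v, v ∉ Pr → 0 ≤ ω v) {D : Finset ℕ}
    (hD : IsCoverOn 0 n D) :
    BddAbove {r : ℝ | ∃ C : Finset ℕ, IsMWVCOn (wpr Pr ω π) 0 n C ∧ r = ∑ q ∈ C ∩ Pr, π q} :=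
  ⟨wsum (wpr Pr ω π) D, by
    rintro r ⟨C, hC, rfl⟩
    exact (sum_inter_le_wsum_wpr hω C).trans (hC.2 D hD)⟩

end Revenue

theorem stmt_14_general (n : ℕ) (Pr : Finset ℕ)
    (ω : ℕ → ℝ) (hω : ∀ v : ℕ, v ∉ Pr → 0 ≤ ω v)
    (p : ℕ) (hp : p ∈ Pr) (π : ℕ → ℝ)
    (hout : ∃ C : Finset ℕ, IsMWVCOn (wpr Pr ω π) 0 n C ∧ p ∉ C) :
    ∀ x : ℝ, π p ≤ x → rev n Pr ω (Function.update π p x) ≤ rev n Pr ω π := by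
  intro x hx
  rcases hx.eq_or_lt with rfl | hlt
  · rw [Function.update_eq_self]
  obtain ⟨C₀, hC₀, hpC₀⟩ := hout
  have hwp : wpr Pr ω π p < x := by simpa [wpr, hp] using hlt
  refine csSup_le_csSup (bddAbove_revenues hω hC₀.1)
    ⟨_, C₀, by rw [wpr_update hp]; exact hC₀.update_of_notMem hpC₀ hwp.le, rfl⟩ ?_
  rintro r ⟨C, hC, rfl⟩
  rw [wpr_update hp] at hC
  have hpC : p ∉ C := hC₀.notMem_of_update hpC₀ hwp hC
  exact ⟨C, hC₀.of_update hpC₀ hC hpC, Finset.sum_update_of_notMem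
    (fun h => hpC (Finset.mem_inter.mp h).1) _ _⟩

/-- In StackVC on a path (no two priceable vertices adjacent), if some
MWVC w.r.t. `w_π` does not contain the priceable vertex `p`, then raising the price of `p`
cannot improve the leader's revenue: `rev(π[p ↦ x]) ≤ rev(π)` for every `x ≥ π(p)`. -/
theorem stmt_14 (n : ℕ) (Pr : Finset ℕ) (hPrn : ∀ q ∈ Pr, q < n)
    (hNoAdj : ∀ q ∈ Pr, q + 1 ∉ Pr)
    (ω : ℕ → ℝ) (hω : ∀ v : ℕ, v ∉ Pr → 0 ≤ ω v)
    (p : ℕ) (hp : p ∈ Pr) (π : ℕ → ℝ)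
    (hout : ∃ C : Finset ℕ, IsMWVCOn (wpr Pr ω π) 0 n C ∧ p ∉ C) :
    ∀ x : ℝ, π p ≤ x → rev n Pr ω (Function.update π p x) ≤ rev n Pr ω π :=
  stmt_14_general n Pr ω hω p hp π hout
end
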